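/- arXiv:2209.04121 — 3 statements merged into one kernel-verified Lean document; each statement's English description precedes it below -/
import Mathlib

section
/- For σ(t) = sin(t), the dual kernel satisfies K_sin(x,y) := E_{w∼N(0,I_d)}[sin(⟨w,x⟩)·sin(⟨w,y⟩)] = e^{-(‖x‖₂² + ‖y‖₂²)/2} · sinh(⟨x,y⟩) for all x, y ∈ ℝ^d. -/
open MeasureTheory ProbabilityTheory Real
open scoped RealInnerProductSpace

/-- The standard Gaussian measure `N(0, I_d)` on `ℝ^d`. -/
noncomputable def stdGaussianE (d : ℕ) : Measure (EuclideanSpace ℝ (Fin d)) :=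
  Measure.map (MeasurableEquiv.toLp 2 (Fin d → ℝ)) (Measure.pi fun _ => gaussianReal 0 1)

/-!
Since `sin a * sin b = (cos (a - b) - cos (a + b)) / 2`, the kernel is half the difference of the
Gaussian averages of `cos ⟪w, x - y⟫` and `cos ⟪w, x + y⟫`. Each is the real part of the
characteristic function `exp (-‖z‖² / 2)` of the standard Gaussian, and expanding
`‖x ∓ y‖² = ‖x‖² ∓ 2⟪x, y⟫ + ‖y‖²` turns the difference into the `sinh`.
-/

section InnerProductSpace

variable {E : Type*} [NormedAddCommGroup E] [InnerProductSpace ℝ E] [MeasurableSpace E]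
  [OpensMeasurableSpace E]

lemma integral_cos_inner_eq_re_charFun (μ : Measure E) [IsFiniteMeasure μ] (t : E) :
    ∫ x, cos ⟪x, t⟫ ∂μ = (charFun μ t).re := by
  have hint : Integrable (fun x ↦ Complex.exp (⟪x, t⟫ * Complex.I)) μ :=
    (integrable_const (1 : ℝ)).mono (by fun_prop) (by simp)
  simp_rw [charFun_apply, ← RCLike.re_to_complex, ← integral_re hint, RCLike.re_to_complex,
    Complex.exp_ofReal_mul_I_re]

lemma integrable_cos_inner (μ : Measure E) [IsFiniteMeasure μ] (t : E) :
    Integrable (fun x ↦ cos ⟪x, t⟫) μ :=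
  (integrable_const (1 : ℝ)).mono (by fun_prop) (by simp [abs_cos_le_one])

variable [FiniteDimensional ℝ E] [BorelSpace E]

lemma integral_cos_inner_stdGaussian (t : E) :
    ∫ x, cos ⟪x, t⟫ ∂(stdGaussian E) = exp (-‖t‖ ^ 2 / 2) := by
  rw [integral_cos_inner_eq_re_charFun, charFun_stdGaussian]
  exact_mod_cast Complex.exp_ofReal_re _

theorem integral_sin_inner_mul_sin_inner_stdGaussian (x y : E) :
    ∫ w, sin ⟪w, x⟫ * sin ⟪w, y⟫ ∂(stdGaussian E) =
      exp (-(‖x‖ ^ 2 + ‖y‖ ^ 2) / 2) * sinh ⟪x, y⟫ := by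
  have product_to_sum (w : E) :
      sin ⟪w, x⟫ * sin ⟪w, y⟫ = (cos ⟪w, x - y⟫ - cos ⟪w, x + y⟫) / 2 := by
    rw [inner_sub_right, inner_add_right, cos_sub, cos_add]
    ring
  simp_rw [product_to_sum]
  rw [integral_div, integral_sub (integrable_cos_inner _ _) (integrable_cos_inner _ _),
    integral_cos_inner_stdGaussian, integral_cos_inner_stdGaussian,
    norm_sub_sq_real, norm_add_sq_real, sinh_eq,
    show -(‖x‖ ^ 2 - 2 * ⟪x, y⟫ + ‖y‖ ^ 2) / 2 = -(‖x‖ ^ 2 + ‖y‖ ^ 2) / 2 + ⟪x, y⟫ by ring,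
    show -(‖x‖ ^ 2 + 2 * ⟪x, y⟫ + ‖y‖ ^ 2) / 2 = -(‖x‖ ^ 2 + ‖y‖ ^ 2) / 2 + -⟪x, y⟫ by ring,
    exp_add, exp_add]
  ring

end InnerProductSpace

lemma stdGaussianE_eq_stdGaussian (d : ℕ) :
    stdGaussianE d = stdGaussian (EuclideanSpace ℝ (Fin d)) :=
  map_pi_eq_stdGaussian

/-- The dual kernel of the sine activation:
`K_sin(x,y) = E_{w∼N(0,I_d)}[sin⟨w,x⟩ sin⟨w,y⟩] = e^{-(‖x‖²+‖y‖²)/2} sinh⟨x,y⟩`. -/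
theorem dualKernel_sin (d : ℕ) (x y : EuclideanSpace ℝ (Fin d)) :
    ∫ w, Real.sin ⟪w, x⟫ * Real.sin ⟪w, y⟫ ∂(stdGaussianE d) =
      Real.exp (-(‖x‖ ^ 2 + ‖y‖ ^ 2) / 2) * Real.sinh ⟪x, y⟫ := by
  rw [stdGaussianE_eq_stdGaussian]
  exact integral_sin_inner_mul_sin_inner_stdGaussian x y
end

section
/- For σ(t) = exp(-At²) with A ≥ 0, the dual activation satisfies k_σ(a,b,c) = 1/√((2Aa²+1)(2Ab²+1) - (2Aabc)²) for all a,b ≥ 0 and c ∈ [-1,1]. -/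
open MeasureTheory ProbabilityTheory Real

/-- The centered bivariate Gaussian with covariance `Λ = [[a², abc],[abc, b²]]`,
realized as the pushforward of two i.i.d. standard Gaussians under whitening. -/
noncomputable def gaussian2 (a b c : ℝ) : Measure (ℝ × ℝ) :=
  Measure.map (fun w => (a * w.1, b * c * w.1 + b * Real.sqrt (1 - c ^ 2) * w.2))
    ((gaussianReal 0 1).prod (gaussianReal 0 1))

/-!
Whitening writes the pair as `(aX, bcX + b√(1-c²)Y)` with `X, Y` i.i.d. standard Gaussians.
Completing the square shows that averaging the Gaussian kernel `exp(-A(t + γY)²)` over `Y`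
returns a Gaussian kernel in `t`: `exp(-At²/D) / √D` with `D = 2Aγ² + 1`. Applying this once in
`Y` and once in `X` leaves a product of two such normalising factors, and the product of the two
`D`'s is exactly the determinant under the square root.
-/

theorem integral_exp_neg_mul_sq_add_gaussianReal (A t γ : ℝ) (hD : 0 < 2 * A * γ ^ 2 + 1) :
    ∫ y, rexp (-A * (t + γ * y) ^ 2) ∂(gaussianReal 0 1) =
      rexp (-A * t ^ 2 / (2 * A * γ ^ 2 + 1)) / √(2 * A * γ ^ 2 + 1) := by
  set D := 2 * A * γ ^ 2 + 1
  have complete_square : ∀ y, gaussianPDFReal 0 1 y • rexp (-A * (t + γ * y) ^ 2) =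
      (√(2 * π))⁻¹ * rexp (-A * t ^ 2 / D) *
        rexp (-(D / 2) * (y + 2 * A * γ * t / D) ^ 2) := by
    intro y
    simp only [gaussianPDFReal_def, NNReal.coe_one, mul_one, sub_zero, smul_eq_mul]
    rw [mul_assoc, mul_assoc, ← exp_add, ← exp_add]
    congr 2
    field_simp
    ring
  rw [integral_gaussianReal_eq_integral_smul one_ne_zero]
  simp_rw [complete_square]
  rw [integral_const_mul, integral_add_right_eq_self (fun y => rexp (-(D / 2) * y ^ 2)),
    integral_gaussian, div_div_eq_mul_div, sqrt_div' _ hD.le, div_eq_mul_inv, div_eq_mul_inv]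
  field_simp

instance isProbabilityMeasure_gaussian2 (a b c : ℝ) : IsProbabilityMeasure (gaussian2 a b c) :=
  Measure.isProbabilityMeasure_map (by fun_prop)

theorem integral_gaussian2_eq_integral_integral (a b c : ℝ) {f : ℝ × ℝ → ℝ}
    (hf : Integrable f (gaussian2 a b c)) :
    ∫ p, f p ∂(gaussian2 a b c) =
      ∫ x, ∫ y, f (a * x, b * c * x + b * √(1 - c ^ 2) * y) ∂(gaussianReal 0 1)
        ∂(gaussianReal 0 1) := by
  have hmeas : Measurable fun w : ℝ × ℝ => (a * w.1, b * c * w.1 + b * √(1 - c ^ 2) * w.2) :=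
    by fun_prop
  rw [gaussian2, integral_map hmeas.aemeasurable hf.aestronglyMeasurable]
  exact integral_prod _ (hf.comp_measurable hmeas)

theorem integrable_exp_neg_mul_sq_mul_exp_neg_mul_sq {A : ℝ} (hA : 0 ≤ A)
    (μ : Measure (ℝ × ℝ)) [IsFiniteMeasure μ] :
    Integrable (fun p => rexp (-A * p.1 ^ 2) * rexp (-A * p.2 ^ 2)) μ := by
  refine .of_bound (by fun_prop) 1 (ae_of_all _ fun p => ?_)
  rw [norm_of_nonneg (by positivity), ← exp_add, exp_le_one_iff]
  nlinarith [sq_nonneg p.1, sq_nonneg p.2]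

theorem dualActivation_gaussian_general (A a b c : ℝ) (hA : 0 ≤ A)
    (hc : c ∈ Set.Icc (-1 : ℝ) 1) :
    ∫ p, Real.exp (-A * p.1 ^ 2) * Real.exp (-A * p.2 ^ 2) ∂(gaussian2 a b c) =
      1 / Real.sqrt ((2 * A * a ^ 2 + 1) * (2 * A * b ^ 2 + 1) -
        (2 * A * a * b * c) ^ 2) := by
  rw [integral_gaussian2_eq_integral_integral a b c
    (integrable_exp_neg_mul_sq_mul_exp_neg_mul_sq hA _)]
  set s := √(1 - c ^ 2)
  have hs : s ^ 2 = 1 - c ^ 2 := sq_sqrt (by nlinarith [hc.1, hc.2])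
  set D := 2 * A * (b * s) ^ 2 + 1
  have hD : 0 < D := by positivity
  set A' := A * a ^ 2 + A * (b * c) ^ 2 / D
  have hA' : 0 < 2 * A' * 1 ^ 2 + 1 := by positivity
  have inner : ∀ x, ∫ y, rexp (-A * (b * c * x + b * s * y) ^ 2) ∂(gaussianReal 0 1) =
      rexp (-A * (b * c * x) ^ 2 / D) / √D :=
    fun x => integral_exp_neg_mul_sq_add_gaussianReal A _ _ hD
  -- the outer integrand is the same kernel again, with `t = 0` and `γ = 1`
  have combine : ∀ x, rexp (-A * (a * x) ^ 2) * (rexp (-A * (b * c * x) ^ 2 / D) / √D) =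
      (√D)⁻¹ * rexp (-A' * (0 + 1 * x) ^ 2) := by
    intro x
    rw [← mul_div_assoc, ← exp_add, div_eq_inv_mul]
    congr 2
    simp only [A']
    field_simp
    ring
  simp_rw [integral_const_mul, inner, combine]
  rw [integral_const_mul, integral_exp_neg_mul_sq_add_gaussianReal A' 0 1 hA']
  have factor : (2 * A * a ^ 2 + 1) * (2 * A * b ^ 2 + 1) - (2 * A * a * b * c) ^ 2 =
      D * (2 * A' * 1 ^ 2 + 1) := by
    simp only [D, A']
    field_simp
    linear_combination (-(4 * A ^ 2 * a ^ 2 * b ^ 2) - 2 * A * b ^ 2) * hs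
  rw [factor, sqrt_mul hD.le, one_div, mul_inv]
  simp

/-- Dual activation of the Gaussian activation `σ(t) = exp(-At²)` with `A ≥ 0`:
`k_σ(a,b,c) = 1/√((2Aa²+1)(2Ab²+1) - (2Aabc)²)`. -/
theorem dualActivation_gaussian (A a b c : ℝ) (hA : 0 ≤ A) (ha : 0 ≤ a) (hb : 0 ≤ b)
    (hc : c ∈ Set.Icc (-1 : ℝ) 1) :
    ∫ p, Real.exp (-A * p.1 ^ 2) * Real.exp (-A * p.2 ^ 2) ∂(gaussian2 a b c) =
      1 / Real.sqrt ((2 * A * a ^ 2 + 1) * (2 * A * b ^ 2 + 1) -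
        (2 * A * a * b * c) ^ 2) :=
  dualActivation_gaussian_general A a b c hA hc
end

section
/- For the ReLU activation σ(t) = max(t,0), the dual activation equals k_σ(a,b,c) = (ab/(2π))·(√(1-c²) + (π - arccos(c))·c) for all a, b ≥ 0 and c ∈ [-1,1]. -/
/-!
Writing `c = cos α` with `α = arccos c ∈ [0, π]`, the whitening map sends a standard Gaussian
`(x, y)` to `(a x, b (cos α · x + sin α · y))`, and positive homogeneity of the ReLU pulls out the
factor `a b`. In polar coordinates `(x, y) = (r cos θ, r sin θ)` the second argument becomes
`r cos (θ - α)`, so the remaining integral factors into the radial moment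
`∫₀^∞ r³ e^{-r²/2} dr = 2` and the angular integral of `max (cos θ) 0 * max (cos (θ - α)) 0`,
supported on the arc `[α - π/2, π/2]`, where it equals `(sin α + (π - α) cos α) / 2`.
-/

open MeasureTheory ProbabilityTheory Real

open Set

theorem max_mul_zero_of_nonneg {R : Type*} [Semiring R] [LinearOrder R] [PosMulMono R]
    {a : R} (x : R) (ha : 0 ≤ a) : max (a * x) 0 = a * max x 0 := by
  rw [mul_max_of_nonneg _ _ ha, mul_zero]

theorem integral_cos_mul_cos_sub (α a b : ℝ) :
    ∫ θ in a..b, cos θ * cos (θ - α) =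
      (sin (2 * b - α) - sin (2 * a - α)) / 4 + (b - a) * cos α / 2 := by
  have hderiv (θ : ℝ) : HasDerivAt (fun θ => sin (2 * θ - α) / 4 + θ * cos α / 2)
      (cos θ * cos (θ - α)) θ := by
    have hlin : HasDerivAt (fun θ => 2 * θ - α) 2 θ := by
      simpa using ((hasDerivAt_id' θ).const_mul 2).sub_const α
    refine ((hlin.sin.div_const 4).add
      ((hasDerivAt_id' θ).mul_const (cos α) |>.div_const 2)).congr_deriv ?_
    have hsum := cos_add_cos (2 * θ - α) α
    rw [show (2 * θ - α + α) / 2 = θ by ring, show (2 * θ - α - α) / 2 = θ - α by ring] at hsum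
    linarith
  rw [intervalIntegral.integral_eq_sub_of_hasDerivAt (fun θ _ => hderiv θ)
    ((by fun_prop : Continuous fun θ => cos θ * cos (θ - α)).intervalIntegrable _ _)]
  ring

theorem max_cos_mul_max_cos_sub_eq_indicator {α θ : ℝ} (hα : α ∈ Icc 0 π)
    (hθ : θ ∈ Icc (-π) π) :
    max (cos θ) 0 * max (cos (θ - α)) 0 =
      (Icc (α - π / 2) (π / 2)).indicator (fun θ => cos θ * cos (θ - α)) θ := by
  obtain ⟨hα₀, hαπ⟩ := hα
  obtain ⟨hθ₁, hθ₂⟩ := hθ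
  by_cases hmem : θ ∈ Icc (α - π / 2) (π / 2)
  · rw [indicator_of_mem hmem,
      max_eq_left (cos_nonneg_of_mem_Icc ⟨by linarith [hmem.1], hmem.2⟩),
      max_eq_left (cos_nonneg_of_mem_Icc ⟨by linarith [hmem.1], by linarith [hmem.2]⟩)]
  rw [indicator_of_notMem hmem]
  rcases not_and_or.mp hmem with hlt | hgt
  · rcases le_or_gt θ (-(π / 2)) with hθπ | hθπ
    · have hcos : cos θ ≤ 0 := by
        rw [← cos_neg]
        exact cos_nonpos_of_pi_div_two_le_of_le (by linarith) (by linarith)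
      rw [max_eq_right hcos, zero_mul]
    · have hcos : cos (θ - α) ≤ 0 := by
        rw [← cos_neg, neg_sub]
        exact cos_nonpos_of_pi_div_two_le_of_le (by linarith) (by linarith)
      rw [max_eq_right hcos, mul_zero]
  · rw [max_eq_right (cos_nonpos_of_pi_div_two_le_of_le (by linarith) (by linarith)), zero_mul]

theorem integral_Ioo_max_cos_mul_max_cos_sub {α : ℝ} (hα : α ∈ Icc 0 π) :
    ∫ θ in Ioo (-π) π, max (cos θ) 0 * max (cos (θ - α)) 0 =
      (sin α + (π - α) * cos α) / 2 := by
  have hsub : Icc (α - π / 2) (π / 2) ⊆ Ioo (-π) π := by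
    rintro θ ⟨h₁, h₂⟩
    constructor <;> linarith [hα.1, pi_pos]
  calc ∫ θ in Ioo (-π) π, max (cos θ) 0 * max (cos (θ - α)) 0
      = ∫ θ in Ioo (-π) π, (Icc (α - π / 2) (π / 2)).indicator
          (fun θ => cos θ * cos (θ - α)) θ :=
        setIntegral_congr_fun measurableSet_Ioo fun θ hθ =>
          max_cos_mul_max_cos_sub_eq_indicator hα (Ioo_subset_Icc_self hθ)
    _ = ∫ θ in (α - π / 2)..(π / 2), cos θ * cos (θ - α) := by
      rw [setIntegral_indicator measurableSet_Icc, inter_eq_right.mpr hsub,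
        integral_Icc_eq_integral_Ioc, intervalIntegral.integral_of_le (by linarith [hα.2])]
    _ = (sin α + (π - α) * cos α) / 2 := by
      rw [integral_cos_mul_cos_sub, show 2 * (π / 2) - α = π - α by ring,
        show 2 * (α - π / 2) - α = -(π - α) by ring, sin_neg, sin_pi_sub]
      ring

theorem integral_Ioi_pow_three_mul_exp_neg_sq_div_two :
    ∫ r in Ioi (0 : ℝ), r ^ 3 * exp (-r ^ 2 / 2) = 2 := by
  have h := integral_rpow_mul_exp_neg_mul_rpow (p := 2) (q := 3) (b := 1 / 2)
    (by norm_num) (by norm_num) (by norm_num)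
  norm_num [Gamma_two] at h
  convert h using 5 with r
  ring

theorem integral_gaussianReal_prod_eq (g : ℝ × ℝ → ℝ) :
    ∫ w, g w ∂(gaussianReal 0 1).prod (gaussianReal 0 1) =
      ∫ w, (2 * π)⁻¹ * exp (-(w.1 ^ 2 + w.2 ^ 2) / 2) * g w := by
  have hfin (x : ℝ) : gaussianPDF 0 1 x < ⊤ := ENNReal.ofReal_lt_top
  have hmeas : Measurable fun w : ℝ × ℝ => gaussianPDF 0 1 w.1 * gaussianPDF 0 1 w.2 :=
    ((measurable_gaussianPDF _ _).comp measurable_fst).mul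
      ((measurable_gaussianPDF _ _).comp measurable_snd)
  rw [gaussianReal_of_var_ne_zero _ one_ne_zero,
    prod_withDensity (measurable_gaussianPDF _ _) (measurable_gaussianPDF _ _),
    ← Measure.volume_eq_prod, integral_withDensity_eq_integral_toReal_smul hmeas
      (.of_forall fun w => ENNReal.mul_lt_top (hfin w.1) (hfin w.2))]
  congr 1 with w
  rw [ENNReal.toReal_mul, toReal_gaussianPDF, toReal_gaussianPDF, smul_eq_mul, gaussianPDFReal,
    gaussianPDFReal, mul_mul_mul_comm, ← mul_inv, ← exp_add, NNReal.coe_one, mul_one,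
    mul_self_sqrt two_pi_pos.le]
  congr 3
  ring

theorem integral_max_mul_max_cos_mul_add_sin_mul {α : ℝ} (hα : α ∈ Icc 0 π) :
    ∫ w, max w.1 0 * max (cos α * w.1 + sin α * w.2) 0
        ∂(gaussianReal 0 1).prod (gaussianReal 0 1) =
      (sin α + (π - α) * cos α) / (2 * π) := by
  have hpolar : EqOn
      (fun p : ℝ × ℝ => p.1 • ((2 * π)⁻¹ *
        exp (-((polarCoord.symm p).1 ^ 2 + (polarCoord.symm p).2 ^ 2) / 2) *
          (max (polarCoord.symm p).1 0 *
            max (cos α * (polarCoord.symm p).1 + sin α * (polarCoord.symm p).2) 0)))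
      (fun p => (2 * π)⁻¹ * ((p.1 ^ 3 * exp (-p.1 ^ 2 / 2)) *
        (max (cos p.2) 0 * max (cos (p.2 - α)) 0)))
      polarCoord.target := by
    rintro ⟨r, θ⟩ ⟨hr, -⟩
    have hrot : cos α * (r * cos θ) + sin α * (r * sin θ) = r * cos (θ - α) := by
      rw [cos_sub]; ring
    simp only [polarCoord_symm_apply, smul_eq_mul]
    rw [mul_pow, mul_pow, ← mul_add, cos_sq_add_sin_sq, mul_one, hrot,
      max_mul_zero_of_nonneg _ hr.le, max_mul_zero_of_nonneg _ hr.le]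
    ring
  rw [integral_gaussianReal_prod_eq, ← integral_comp_polarCoord_symm,
    setIntegral_congr_fun polarCoord.open_target.measurableSet hpolar, integral_const_mul,
    polarCoord_target, Measure.volume_eq_prod,
    setIntegral_prod_mul (fun r => r ^ 3 * exp (-r ^ 2 / 2))
      (fun θ => max (cos θ) 0 * max (cos (θ - α)) 0),
    integral_Ioi_pow_three_mul_exp_neg_sq_div_two, integral_Ioo_max_cos_mul_max_cos_sub hα]
  field_simp

/-- Dual activation of the ReLU `σ(t) = max(t,0)`:
`k_σ(a,b,c) = (ab/(2π))(√(1-c²) + (π - arccos c)c)`. -/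
theorem dualActivation_relu (a b c : ℝ) (ha : 0 ≤ a) (hb : 0 ≤ b)
    (hc : c ∈ Set.Icc (-1 : ℝ) 1) :
    ∫ p, max p.1 0 * max p.2 0 ∂(gaussian2 a b c) =
      a * b / (2 * π) *
        (Real.sqrt (1 - c ^ 2) + (π - Real.arccos c) * c) := by
  have hα : arccos c ∈ Icc 0 π := ⟨arccos_nonneg c, arccos_le_pi c⟩
  have hwhiten (w : ℝ × ℝ) :
      max (a * w.1) 0 * max (b * c * w.1 + b * √(1 - c ^ 2) * w.2) 0 =
        a * b * (max w.1 0 * max (cos (arccos c) * w.1 + sin (arccos c) * w.2) 0) := by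
    rw [cos_arccos hc.1 hc.2, sin_arccos, max_mul_zero_of_nonneg _ ha,
      show b * c * w.1 + b * √(1 - c ^ 2) * w.2 = b * (c * w.1 + √(1 - c ^ 2) * w.2) by ring,
      max_mul_zero_of_nonneg _ hb]
    ring
  rw [gaussian2, integral_map (by fun_prop) (by fun_prop)]
  simp only [hwhiten]
  rw [integral_const_mul, integral_max_mul_max_cos_mul_add_sin_mul hα, cos_arccos hc.1 hc.2,
    sin_arccos]
  ring
end
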